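/- Let N, K be natural numbers with 2 ≤ K ≤ N. Then there exists a testing design feasible for (N, K) with at most ⌊log(K · C(N, K)) / log(K/(K−1))⌋ + 1 tests, where C(N, K) is the binomial coefficient and log denotes the natural logarithm; in particular T(N, K) ≤ ⌈K · log(K · C(N, K))⌉. -/

import Mathlib

/-- The outcome of a cascaded test `t` (a list of items) on a defective set `S`:
the first element of `t` belonging to `S`, or `none` if there is none. -/
def outcome {N : ℕ} (t : List (Fin N)) (S : Finset (Fin N)) : Option (Fin N) :=
  (t.filter (fun x => x ∈ S)).head?

/-- A testing design `𝒯` (an indexed family of tests) is feasible for `(N, K)` if the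
map sending each `S ⊆ Fin N` with `|S| ≤ K` to its vector of test outcomes is injective
on `{S | |S| ≤ K}`. -/
def Feasible (N K : ℕ) {T : ℕ} (𝒯 : Fin T → List (Fin N)) : Prop :=
  Set.InjOn (fun (S : Finset (Fin N)) => fun i : Fin T => outcome (𝒯 i) S)
    {S : Finset (Fin N) | S.card ≤ K}

/-- `TNK N K`: the minimum number of tests over all duplicate-free testing designs
feasible for `(N, K)`. -/
noncomputable def TNK (N K : ℕ) : ℕ :=
  sInf {T : ℕ | ∃ 𝒯 : Fin T → List (Fin N), (∀ i, (𝒯 i).Nodup) ∧ Feasible N K 𝒯}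

/-- `fT 𝒯 S v`: the number of tests in the design `𝒯` whose outcome on `S` is `some v`. -/
def fT {N T : ℕ} (𝒯 : Fin T → List (Fin N)) (S : Finset (Fin N)) (v : Fin N) : ℕ :=
  (Finset.univ.filter (fun i : Fin T => outcome (𝒯 i) S = some v)).card

/-- A design is in systematic form if every test is nonempty and the first element of
each test does not occur in any other test. -/
def Systematic {N T : ℕ} (𝒯 : Fin T → List (Fin N)) : Prop :=
  ∀ i : Fin T, 𝒯 i ≠ [] ∧ ∀ u : Fin N, (𝒯 i).head? = some u → ∀ j : Fin T, j ≠ i → u ∉ 𝒯 j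


/-! It suffices to use tests that list all items in the order of a permutation. For `|S| = K` and
`v ∈ S`, a uniformly random permutation has outcome `v` on `S` with probability `1/K`, by the
symmetry `σ ↦ swap v v' * σ`. A union bound over the `K · C(N, K)` pairs `(S, v)` shows that `T`
independent random permutations with `K · C(N, K) · (1 - 1/K)^T < 1` give every `v ∈ S` as an
outcome on `S` for all such pairs. Passing to supersets of size `K`, every set of size at most `K`
is then the set of its outcomes. The bound on `T(N, K)` follows from `log (K/(K-1)) > 1/K`. -/

open Finset
open scoped Nat

section Outcome

variable {N : ℕ}

lemma outcome_cons (x : Fin N) (t : List (Fin N)) (S : Finset (Fin N)) :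
    outcome (x :: t) S = if x ∈ S then some x else outcome t S := by
  by_cases h : x ∈ S <;> simp [outcome, h]

lemma mem_of_outcome_eq_some {t : List (Fin N)} {S : Finset (Fin N)} {v : Fin N}
    (h : outcome t S = some v) : v ∈ S := by
  simpa using (List.mem_filter.1 (List.mem_of_mem_head? h)).2

lemma outcome_eq_some_of_subset {t : List (Fin N)} {S S' : Finset (Fin N)} {v : Fin N}
    (hSS' : S ⊆ S') (hv : v ∈ S) (h : outcome t S' = some v) : outcome t S = some v := by
  induction t with
  | nil => simp [outcome] at h
  | cons x t ih =>
    rw [outcome_cons] at h ⊢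
    by_cases hx : x ∈ S'
    · rw [if_pos hx, Option.some_inj] at h
      subst h
      rw [if_pos hv]
    · rw [if_neg hx] at h
      rw [if_neg fun hxS => hx (hSS' hxS)]
      exact ih h

lemma outcome_map {e : Fin N → Fin N} {S : Finset (Fin N)} (he : ∀ x, e x ∈ S ↔ x ∈ S)
    (t : List (Fin N)) : outcome (t.map e) S = (outcome t S).map e := by
  simp only [outcome, List.filter_map, List.head?_map]
  congr 2
  exact List.filter_congr fun x _ => by simp [he x]

end Outcome

section Feasible

variable {N K T : ℕ} {𝒯 : Fin T → List (Fin N)}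

lemma subset_of_outcome_eq {A B : Finset (Fin N)}
    (hA : ∀ v ∈ A, ∃ i, outcome (𝒯 i) A = some v) (hAB : ∀ i, outcome (𝒯 i) A = outcome (𝒯 i) B) :
    A ⊆ B := fun v hv =>
  have ⟨i, hi⟩ := hA v hv
  mem_of_outcome_eq_some ((hAB i).symm.trans hi)

lemma feasible_of_forall_card_eq (hKN : K ≤ N)
    (h𝒯 : ∀ S : Finset (Fin N), #S = K → ∀ v ∈ S, ∃ i, outcome (𝒯 i) S = some v) :
    Feasible N K 𝒯 := by
  have hcover : ∀ S : Finset (Fin N), #S ≤ K → ∀ v ∈ S, ∃ i, outcome (𝒯 i) S = some v := by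
    intro S hS v hv
    obtain ⟨S', hSS', hS'⟩ := exists_superset_card_eq hS (by simpa using hKN)
    obtain ⟨i, hi⟩ := h𝒯 S' hS' v (hSS' hv)
    exact ⟨i, outcome_eq_some_of_subset hSS' hv hi⟩
  intro A hA B hB hAB
  exact (subset_of_outcome_eq (hcover A hA) (congrFun hAB)).antisymm
    (subset_of_outcome_eq (hcover B hB) fun i => (congrFun hAB i).symm)

end Feasible

lemma Finset.exists_forall_exists_notMem_of_sum_card_pow_lt {α ι : Type*} [Fintype α]
    (Q : Finset ι) (B : ι → Finset α) {T : ℕ}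
    (h : ∑ q ∈ Q, #(B q) ^ T < Fintype.card α ^ T) :
    ∃ f : Fin T → α, ∀ q ∈ Q, ∃ i, f i ∉ B q := by
  classical
  let bad := Q.biUnion fun q => Fintype.piFinset fun _ : Fin T => B q
  have hbad : #bad < #(univ : Finset (Fin T → α)) :=
    calc #bad ≤ ∑ q ∈ Q, #(Fintype.piFinset fun _ : Fin T => B q) := card_biUnion_le
      _ = ∑ q ∈ Q, #(B q) ^ T := by simp [Fintype.card_piFinset]
      _ < #(univ : Finset (Fin T → α)) := by simpa using h
  obtain ⟨f, -, hf⟩ := exists_mem_notMem_of_card_lt_card hbad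
  refine ⟨f, fun q hq => ?_⟩
  by_contra! hfq
  exact hf (mem_biUnion.2 ⟨q, hq, Fintype.mem_piFinset.2 hfq⟩)

section PermTest

variable {N : ℕ}

def permTest (σ : Equiv.Perm (Fin N)) : List (Fin N) := (List.finRange N).map σ

lemma permTest_nodup (σ : Equiv.Perm (Fin N)) : (permTest σ).Nodup :=
  (List.nodup_finRange N).map σ.injective

lemma permTest_mul (τ σ : Equiv.Perm (Fin N)) : permTest (τ * σ) = (permTest σ).map τ := by
  simp [permTest, List.map_map, Function.comp_def]

lemma exists_outcome_permTest_eq_some {S : Finset (Fin N)} (hS : S.Nonempty)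
    (σ : Equiv.Perm (Fin N)) : ∃ v, outcome (permTest σ) S = some v := by
  obtain ⟨w, hw⟩ := hS
  refine Option.ne_none_iff_exists'.1 fun h => ?_
  simp only [outcome, List.head?_eq_none_iff, List.filter_eq_nil_iff, decide_eq_true_eq] at h
  exact h w (List.mem_map.2 ⟨σ.symm w, List.mem_finRange _, σ.apply_symm_apply w⟩) hw

def permsWithOutcome (S : Finset (Fin N)) (v : Fin N) : Finset (Equiv.Perm (Fin N)) :=
  {σ | outcome (permTest σ) S = some v}

lemma card_permsWithOutcome_eq {S : Finset (Fin N)} {v v' : Fin N} (hv : v ∈ S) (hv' : v' ∈ S) :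
    #(permsWithOutcome S v) = #(permsWithOutcome S v') := by
  have hS (x : Fin N) : Equiv.swap v v' x ∈ S ↔ x ∈ S := by
    rw [Equiv.swap_apply_def]
    split_ifs <;> simp_all
  have hswap (σ : Equiv.Perm (Fin N)) :
      outcome (permTest (Equiv.swap v v' * σ)) S =
        (outcome (permTest σ) S).map (Equiv.swap v v') := by
    rw [permTest_mul, outcome_map hS]
  apply card_nbij' (Equiv.swap v v' * ·) (Equiv.swap v v' * ·)
  · intro σ hσ
    simp_all [permsWithOutcome]
  · intro σ hσ
    simp_all [permsWithOutcome]
  · intro σ _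
    simp [Equiv.swap_mul_self_mul]
  · intro σ _
    simp [Equiv.swap_mul_self_mul]

lemma card_mul_card_permsWithOutcome {S : Finset (Fin N)} {v : Fin N} (hv : v ∈ S) :
    #S * #(permsWithOutcome S v) = N ! := by
  have hmaps : Set.MapsTo (fun σ : Equiv.Perm (Fin N) => outcome (permTest σ) S)
      ↑(univ : Finset (Equiv.Perm (Fin N))) ↑(S.map Function.Embedding.some) := by
    intro σ _
    obtain ⟨w, hw⟩ := exists_outcome_permTest_eq_some ⟨v, hv⟩ σ
    simpa [hw] using mem_of_outcome_eq_some hw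
  calc #S * #(permsWithOutcome S v) = ∑ w ∈ S, #(permsWithOutcome S w) := by
        rw [sum_congr rfl fun w hw => card_permsWithOutcome_eq hw hv, sum_const, smul_eq_mul]
    _ = #(univ : Finset (Equiv.Perm (Fin N))) := by
        rw [card_eq_sum_card_fiberwise hmaps, sum_map]
        rfl
    _ = N ! := by simp [Fintype.card_perm]

lemma card_mul_card_compl_permsWithOutcome {S : Finset (Fin N)} {v : Fin N} (hv : v ∈ S) :
    #S * #(permsWithOutcome S v)ᶜ = (#S - 1) * N ! := by
  rw [card_compl, Fintype.card_perm, Fintype.card_fin, Nat.mul_sub, Nat.sub_one_mul,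
    card_mul_card_permsWithOutcome hv]

lemma exists_feasible_permTest {K T : ℕ} (hKN : K ≤ N)
    (hT : (K - 1) ^ T * (K * N.choose K) < K ^ T) :
    ∃ σ : Fin T → Equiv.Perm (Fin N), Feasible N K fun i => permTest (σ i) := by
  let Q := (univ.powersetCard K).sigma fun S : Finset (Fin N) => S
  have hQ : ∀ q ∈ Q, #q.1 = K ∧ q.2 ∈ q.1 := fun q hq => by
    simpa [Q, mem_sigma, mem_powersetCard] using hq
  have hQcard : #Q = N.choose K * K := by
    rw [card_sigma, sum_congr rfl fun S hS => (mem_powersetCard.1 hS).2, sum_const,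
      card_powersetCard, card_univ, Fintype.card_fin, smul_eq_mul]
  have hbad : ∀ q ∈ Q,
      K ^ T * #(permsWithOutcome q.1 q.2)ᶜ ^ T = (K - 1) ^ T * N ! ^ T := fun q hq => by
    rw [← mul_pow, ← mul_pow, ← (hQ q hq).1, card_mul_card_compl_permsWithOutcome (hQ q hq).2]
  have hsum : ∑ q ∈ Q, #(permsWithOutcome q.1 q.2)ᶜ ^ T < N ! ^ T := by
    refine Nat.lt_of_mul_lt_mul_left (a := K ^ T) ?_
    rw [mul_sum, sum_congr rfl hbad, sum_const, smul_eq_mul, hQcard]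
    calc N.choose K * K * ((K - 1) ^ T * N ! ^ T)
      _ = (K - 1) ^ T * (K * N.choose K) * N ! ^ T := by ring
      _ < K ^ T * N ! ^ T := Nat.mul_lt_mul_of_pos_right hT (by positivity)
  obtain ⟨σ, hσ⟩ := exists_forall_exists_notMem_of_sum_card_pow_lt Q
    (fun q => (permsWithOutcome q.1 q.2)ᶜ) (by rwa [Fintype.card_perm, Fintype.card_fin])
  refine ⟨σ, feasible_of_forall_card_eq hKN fun S hS v hv => ?_⟩
  obtain ⟨i, hi⟩ := hσ ⟨S, v⟩ (mem_sigma.2 ⟨mem_powersetCard.2 ⟨subset_univ S, hS⟩, hv⟩)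
  exact ⟨i, by simpa [permsWithOutcome] using hi⟩

end PermTest

lemma Real.inv_lt_log_div_sub_one {K : ℝ} (hK : 1 < K) : K⁻¹ < Real.log (K / (K - 1)) := by
  have hlt := Real.log_lt_sub_one_of_pos (x := (K - 1) / K) (by bound) (by
    rw [Ne, div_eq_one_iff_eq (by linarith)]
    linarith)
  rw [← inv_div, Real.log_inv]
  have : (K - 1) / K - 1 = -K⁻¹ := by field_simp; ring
  linarith

lemma Real.log_div_log_div_sub_one_lt {K x : ℝ} (hK : 1 < K) (hx : 1 < x) :
    Real.log x / Real.log (K / (K - 1)) < K * Real.log x :=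
  calc Real.log x / Real.log (K / (K - 1)) < Real.log x / K⁻¹ :=
        div_lt_div_of_pos_left (Real.log_pos hx) (by positivity) (Real.inv_lt_log_div_sub_one hK)
    _ = K * Real.log x := by rw [div_inv_eq_mul, mul_comm]

lemma sub_one_pow_mul_lt_pow {K M T : ℕ} (hK : 1 < K)
    (hT : Real.log M / Real.log ((K : ℝ) / ((K : ℝ) - 1)) < T) : (K - 1) ^ T * M < K ^ T := by
  rcases M.eq_zero_or_pos with rfl | hM
  · simpa using pow_pos (by omega : 0 < K) T
  have hK' : (1 : ℝ) < K := by exact_mod_cast hK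
  have hc : 0 < Real.log ((K : ℝ) / ((K : ℝ) - 1)) :=
    Real.log_pos ((one_lt_div (by linarith)).2 (by linarith))
  have hlog : Real.log M < Real.log (((K : ℝ) / ((K : ℝ) - 1)) ^ T) := by
    rw [Real.log_pow]
    exact (div_lt_iff₀ hc).1 hT
  have hMc := (Real.log_lt_log_iff (by positivity) (by bound)).1 hlog
  rw [div_pow, lt_div_iff₀ (by bound)] at hMc
  rw [← Nat.cast_lt (α := ℝ)]
  push_cast [Nat.cast_sub hK.le]
  linarith

theorem stmt9 (N K : ℕ) (hK : 2 ≤ K) (hKN : K ≤ N) :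
    (∃ (T : ℕ) (𝒯 : Fin T → List (Fin N)),
        (∀ i, (𝒯 i).Nodup) ∧ Feasible N K 𝒯 ∧
        (T : ℤ) ≤ ⌊Real.log ((K * N.choose K : ℕ) : ℝ) /
            Real.log ((K : ℝ) / ((K : ℝ) - 1))⌋ + 1) ∧
    (TNK N K : ℤ) ≤ ⌈(K : ℝ) * Real.log ((K * N.choose K : ℕ) : ℝ)⌉ := by
  set M := K * N.choose K
  set x := Real.log M / Real.log ((K : ℝ) / ((K : ℝ) - 1))
  have hM : 1 < M := hK.trans (Nat.le_mul_of_pos_right K (Nat.choose_pos hKN))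
  have hK' : (1 : ℝ) < K := by exact_mod_cast hK
  have hxM : x < K * Real.log M := Real.log_div_log_div_sub_one_lt hK' (by exact_mod_cast hM)
  have hx : 0 ≤ x := div_nonneg (Real.log_natCast_nonneg M)
    (Real.log_nonneg ((one_le_div (by linarith)).2 (by linarith)))
  set T := (⌊x⌋ + 1).toNat
  have hTx : (T : ℤ) = ⌊x⌋ + 1 := Int.toNat_of_nonneg (by positivity)
  have hxT : x < T := by
    have : ((T : ℤ) : ℝ) = ⌊x⌋ + 1 := by exact_mod_cast hTx
    exact_mod_cast this ▸ Int.lt_floor_add_one x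
  obtain ⟨σ, hσ⟩ := exists_feasible_permTest hKN (sub_one_pow_mul_lt_pow hK hxT)
  have hTNK : TNK N K ≤ T := Nat.sInf_le ⟨_, fun i => permTest_nodup (σ i), hσ⟩
  have hfloor : ⌊x⌋ < ⌈(K : ℝ) * Real.log M⌉ := by
    exact_mod_cast (Int.floor_le x).trans_lt (hxM.trans_le (Int.le_ceil _))
  exact ⟨⟨T, _, fun i => permTest_nodup (σ i), hσ, hTx.le⟩, by omega⟩
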